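/- arXiv:2405.07374 — 4 statements merged into one kernel-verified Lean document; each statement's English description precedes it below -/
import Mathlib

section
/- Let s_1, …, s_{n+1} be i.i.d. real-valued random variables whose common distribution is atomless, and let 1 ≤ k ≤ n. Then P( s_{n+1} ≤ s_{(k)} ) = k/(n+1), where s_{(k)} denotes the k-th smallest value among s_1, …, s_n. (Key step in the proof of Theorem 3.2: the probability that a fresh conformity score falls below the k-th empirical order statistic of n i.i.d. conformity scores is exactly k/(n+1).) -/
/-!
Whatever the ties, `s_{n+1} ≤ s_{(k)}` holds exactly when fewer than `k` of `s_1, …, s_n` lie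
strictly below `s_{n+1}`, i.e. when the rank of `s_{n+1}` among all `n + 1` scores (the number of
scores strictly below it) is less than `k`. The joint law is a product measure, so it is invariant
under permutations of the coordinates and every coordinate has the same probability `p` of having
rank `< k`. Ties have probability zero, so almost surely the ranks are a permutation of
`0, …, n` and exactly `k` coordinates have rank `< k`; taking expectations, `(n + 1) p = k`.
-/

open MeasureTheory ProbabilityTheory

/-- The `k`-th smallest value among `v 0, …, v (n-1)` (1-indexed: `k = 1` gives the minimum). -/
noncomputable def kthSmallest {n : ℕ} (v : Fin n → ℝ) (k : ℕ) : ℝ :=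
  ((List.ofFn v).mergeSort (· ≤ ·)).getD (k - 1) 0

open Finset

theorem List.countP_ofFn {α : Type*} {n : ℕ} (f : Fin n → α) (p : α → Prop)
    [DecidablePred p] :
    (List.ofFn f).countP p = #{i | p (f i)} := by
  rw [← Multiset.coe_countP, ← Fin.univ_val_map, Multiset.countP_map]
  rfl

theorem Monotone.lt_iff_lt_card_filter_lt {α : Type*} [LinearOrder α] {N : ℕ} {f : Fin N → α}
    (hf : Monotone f) (m : Fin N) (y : α) : f m < y ↔ (m : ℕ) < #{j | f j < y} := by
  constructor
  · intro h
    calc (m : ℕ) < #(Iic m) := by simp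
      _ ≤ #{j | f j < y} := card_le_card fun j hj => by
        simpa using (hf (mem_Iic.1 hj)).trans_lt h
  · contrapose!
    intro hy
    calc #{j | f j < y} ≤ #(Iio m) := card_le_card fun j hj => mem_Iio.2 <|
          lt_of_not_ge fun hmj => (hy.trans (hf hmj)).not_gt (mem_filter.1 hj).2
      _ = m := by simp

theorem le_kthSmallest_iff {n : ℕ} (v : Fin n → ℝ) {k : ℕ} (hk1 : 1 ≤ k) (hkn : k ≤ n)
    (y : ℝ) :
    y ≤ kthSmallest v k ↔ #{i | v i < y} < k := by
  set l := (List.ofFn v).mergeSort (· ≤ ·)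
  have hk : k - 1 < l.length := by simp only [List.length_mergeSort, List.length_ofFn, l]; omega
  have hcount : #{j | l.get j < y} = #{i | v i < y} := by
    rw [← List.countP_ofFn l.get (· < y), List.ofFn_get, ← List.countP_ofFn v (· < y),
      (List.mergeSort_perm (List.ofFn v) _).countP_eq]
  have hlt : l[k - 1] < y ↔ k - 1 < #{j | l.get j < y} :=
    List.sortedLE_mergeSort.monotone_get.lt_iff_lt_card_filter_lt _ y
  rw [kthSmallest, List.getD_eq_getElem l 0 hk, ← not_lt, hlt, hcount]
  omega

section Rank

variable {ι α : Type*} [Fintype ι] [LinearOrder α]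

def tupleRank (x : ι → α) (i : ι) : ℕ := #{j | x j < x i}

theorem tupleRank_lt_card (x : ι → α) (i : ι) : tupleRank x i < Fintype.card ι :=
  card_lt_univ_of_notMem (x := i) (by simp)

theorem tupleRank_lt_tupleRank {x : ι → α} {i j : ι} (h : x i < x j) :
    tupleRank x i < tupleRank x j :=
  card_lt_card ⟨monotone_filter_right _ fun _ _ hl => hl.trans h,
    fun hsub => (mem_filter.1 (hsub (by simpa using h))).2.false⟩

theorem tupleRank_injective {x : ι → α} (hx : Function.Injective x) :
    Function.Injective (tupleRank x) := by
  intro i j hij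
  by_contra hne
  rcases lt_or_gt_of_ne (hx.ne hne) with h | h
  · exact (tupleRank_lt_tupleRank h).ne hij
  · exact (tupleRank_lt_tupleRank h).ne' hij

theorem card_tupleRank_lt {x : ι → α} (hx : Function.Injective x) {k : ℕ}
    (hk : k ≤ Fintype.card ι) : #{i | tupleRank x i < k} = k := by
  classical
  let e : ι ≃ Fin (Fintype.card ι) := Equiv.ofBijective
    (fun i => ⟨tupleRank x i, tupleRank_lt_card x i⟩)
    ((Fintype.bijective_iff_injective_and_card _).2
      ⟨fun i j h => tupleRank_injective hx (Fin.mk.inj_iff.1 h), by simp⟩)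
  rw [card_equiv e (t := {r : Fin (Fintype.card ι) | (r : ℕ) < k}) (by simp [e]),
    Fin.card_filter_val_lt, min_eq_right hk]

theorem tupleRank_comp_perm (x : ι → α) (σ : Equiv.Perm ι) (i : ι) :
    tupleRank (x ∘ σ) i = tupleRank x (σ i) :=
  card_equiv σ (by simp)

theorem tupleRank_last {n : ℕ} (x : Fin (n + 1) → α) :
    tupleRank x (Fin.last n) = #{i : Fin n | x i.castSucc < x (Fin.last n)} := by
  simp only [tupleRank, card_filter, Fin.sum_univ_castSucc, lt_self_iff_false, if_false, add_zero]

end Rank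

section Ties

variable {Ω α : Type*} [MeasurableSpace Ω] [MeasurableSpace α] [MeasurableEq α]

theorem MeasureTheory.Measure.prod_diagonal_eq_zero (ν₁ ν₂ : Measure α) [SFinite ν₂]
    [NullSingletonClass ν₂] : (ν₁.prod ν₂) (Set.diagonal α) = 0 := by
  rw [Measure.measure_prod_null measurableSet_diagonal]
  refine Filter.Eventually.of_forall fun a => ?_
  simp [Set.preimage, Set.diagonal]

theorem ProbabilityTheory.IndepFun.measure_eq_eq_zero {μ : Measure Ω} [IsFiniteMeasure μ]
    {X Y : Ω → α} (hXY : IndepFun X Y μ) (hX : AEMeasurable X μ) (hY : AEMeasurable Y μ)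
    [NullSingletonClass (μ.map Y)] : μ {ω | X ω = Y ω} = 0 := by
  have hpair : μ {ω | X ω = Y ω} = μ.map (fun ω => (X ω, Y ω)) (Set.diagonal α) := by
    rw [Measure.map_apply_of_aemeasurable (hX.prodMk hY) measurableSet_diagonal]; rfl
  rw [hpair, hXY.map_prod_eq_prod_map_map hX hY, Measure.prod_diagonal_eq_zero]

theorem MeasureTheory.Measure.ae_injective_pi {ι : Type*} [Fintype ι] (ν : Measure α)
    [IsProbabilityMeasure ν] [NullSingletonClass ν] :
    ∀ᵐ x ∂Measure.pi (fun _ : ι => ν), Function.Injective x := by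
  have hcoord : iIndepFun (fun i (x : ι → α) => x i) (Measure.pi fun _ => ν) :=
    iIndepFun_pi (X := fun _ => id) fun _ => aemeasurable_id
  have hnull (j : ι) : NullSingletonClass ((Measure.pi fun _ : ι => ν).map (fun x => x j)) := by
    rw [(measurePreserving_eval _ j).map_eq]; infer_instance
  have hne : ∀ᵐ x ∂Measure.pi (fun _ : ι => ν), ∀ i j, i ≠ j → x i ≠ x j := by
    simp only [ae_all_iff]
    intro i j hij
    exact measure_eq_zero_iff_ae_notMem.1 ((hcoord.indepFun hij).measure_eq_eq_zero
      (measurable_pi_apply i).aemeasurable (measurable_pi_apply j).aemeasurable)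
  filter_upwards [hne] with x hx using Function.injective_iff_pairwise_ne.2 hx

end Ties

section UniformRank

variable {ι α : Type*} [Fintype ι] [LinearOrder α] [TopologicalSpace α]
  [OrderClosedTopology α] [SecondCountableTopology α] [MeasurableSpace α] [OpensMeasurableSpace α]

theorem measurable_tupleRank (i : ι) : Measurable fun x : ι → α => tupleRank x i := by
  simp only [tupleRank, card_filter]
  exact Finset.measurable_sum _ fun j _ => Measurable.ite
    (measurableSet_lt (measurable_pi_apply j) (measurable_pi_apply i)) measurable_const
    measurable_const

theorem measure_pi_tupleRank_lt_eq (ν : Measure α) [SigmaFinite ν] (i j : ι) (k : ℕ) :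
    Measure.pi (fun _ => ν) {x | tupleRank x i < k} =
      Measure.pi (fun _ => ν) {x | tupleRank x j < k} := by
  classical
  have he := measurePreserving_arrowCongr' (fun _ : ι => ν) (fun _ => ν) (Equiv.swap i j)
    (MeasurableEquiv.refl α) fun _ => MeasurePreserving.id ν
  have hpre : MeasurableEquiv.arrowCongr' (Equiv.swap i j) (MeasurableEquiv.refl α) ⁻¹'
      {x | tupleRank x j < k} = {x | tupleRank x i < k} := by
    ext x
    have hx : MeasurableEquiv.arrowCongr' (Equiv.swap i j) (MeasurableEquiv.refl α) x =
        x ∘ Equiv.swap i j := rfl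
    simp only [Set.mem_preimage, Set.mem_ofPred_eq, hx, tupleRank_comp_perm,
      Equiv.swap_apply_right]
  rw [← hpre, he.measure_preimage]
  exact (measurableSet_lt (measurable_tupleRank j) measurable_const).nullMeasurableSet

theorem measure_pi_tupleRank_lt (ν : Measure α) [IsProbabilityMeasure ν] [NullSingletonClass ν]
    (i : ι) {k : ℕ} (hk : k ≤ Fintype.card ι) :
    Measure.pi (fun _ => ν) {x | tupleRank x i < k} = k / Fintype.card ι := by
  set π := Measure.pi fun _ : ι => ν
  have hmeas (j : ι) : MeasurableSet {x : ι → α | tupleRank x j < k} :=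
    measurableSet_lt (measurable_tupleRank j) measurable_const
  have hsum : ∑ j, π {x | tupleRank x j < k} = k :=
    calc ∑ j, π {x | tupleRank x j < k}
        = ∫⁻ x, ∑ j, {x | tupleRank x j < k}.indicator 1 x ∂π := by
          rw [lintegral_finsetSum _ fun j _ => measurable_one.indicator (hmeas j)]
          simp only [lintegral_indicator_one (hmeas _)]
      _ = ∫⁻ _, (k : ENNReal) ∂π := by
          refine lintegral_congr_ae ?_
          filter_upwards [Measure.ae_injective_pi ν] with x hx
          simp [Set.indicator_apply, Finset.sum_boole, card_tupleRank_lt hx hk]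
      _ = k := by simp
  rw [Finset.sum_congr rfl fun j _ => measure_pi_tupleRank_lt_eq ν j i k, Finset.sum_const,
    Finset.card_univ, nsmul_eq_mul] at hsum
  have hι : (Fintype.card ι : ENNReal) ≠ 0 := by
    simpa using (Fintype.card_pos_iff.2 ⟨i⟩).ne'
  exact (ENNReal.eq_div_iff hι (ENNReal.natCast_ne_top _)).2 hsum

end UniformRank

/-- **Key step in the proof of Theorem 3.2.** If `s_1, …, s_{n+1}` are i.i.d. real random
variables with atomless common distribution and `1 ≤ k ≤ n`, then the probability that the
fresh score `s_{n+1}` falls below the `k`-th smallest of `s_1, …, s_n` is exactly `k/(n+1)`. -/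
theorem prob_le_kth_order_statistic
    {Ω : Type*} [MeasurableSpace Ω]
    (μ : Measure Ω) [IsProbabilityMeasure μ]
    (n : ℕ)
    (s : Fin (n + 1) → Ω → ℝ)
    (hmeas : ∀ i, Measurable (s i))
    (hindep : iIndepFun s μ)
    (hident : ∀ i, μ.map (s i) = μ.map (s 0))
    (hatomless : ∀ x : ℝ, μ {ω | s 0 ω = x} = 0)
    (k : ℕ) (hk1 : 1 ≤ k) (hkn : k ≤ n) :
    (μ {ω | s (Fin.last n) ω ≤ kthSmallest (fun i : Fin n => s i.castSucc ω) k}).toReal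
      = k / (n + 1) := by
  set ν := μ.map (s 0)
  have : IsProbabilityMeasure ν := Measure.isProbabilityMeasure_map (hmeas 0).aemeasurable
  have : NullSingletonClass ν := ⟨fun x => by
    rw [Measure.map_apply (hmeas 0) (measurableSet_singleton x)]; exact hatomless x⟩
  have hS : Measurable fun ω i => s i ω := measurable_pi_lambda _ hmeas
  have hlaw : μ.map (fun ω i => s i ω) = Measure.pi fun _ => ν := by
    rw [hindep.map_fun_eq_pi_map fun i => (hmeas i).aemeasurable, funext hident]
  have hevent : {ω | s (Fin.last n) ω ≤ kthSmallest (fun i : Fin n => s i.castSucc ω) k} =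
      (fun ω i => s i ω) ⁻¹' {x | tupleRank x (Fin.last n) < k} := by
    ext ω
    simp only [Set.mem_ofPred_eq, Set.mem_preimage, le_kthSmallest_iff _ hk1 hkn, tupleRank_last]
  rw [hevent, ← Measure.map_apply hS (measurableSet_lt (measurable_tupleRank _) measurable_const),
    hlaw, measure_pi_tupleRank_lt ν _ (by simp; omega)]
  simp [ENNReal.toReal_div, ENNReal.toReal_add]
end

section
/- Let s_1, …, s_{n+1} be i.i.d. real-valued random variables whose common distribution is atomless. Then the rank of s_{n+1} among s_1, …, s_{n+1} is uniformly distributed on {1, …, n+1}; i.e., for every k ∈ {1, …, n+1}, P( #{ j ≤ n : s_j < s_{n+1} } = k − 1 ) = 1/(n+1). (Exchangeability step in the proof of Theorem 3.2: a new conformity score has equal probability of falling into any of the n+1 intervals determined by the n sorted conformity scores.) -/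
/-!
Under an i.i.d. law the coordinates are exchangeable, so transposing coordinates `i` and `n + 1`
shows that every coordinate has the same probability of having rank `k - 1`. Since the common law
is atomless, ties have probability zero, and on the complement of the ties exactly one coordinate
has rank `k - 1`. Hence these `n + 1` equal probabilities sum to `1`.
-/

open MeasureTheory ProbabilityTheory Finset Function

section Rank

variable {ι α : Type*} [Fintype ι] [LinearOrder α]

def rank (x : ι → α) (i : ι) : ℕ := #{j | x j < x i}

theorem rank_lt_rank {x : ι → α} {i i' : ι} (h : x i < x i') : rank x i < rank x i' := by
  refine card_lt_card (ssubset_iff_of_subset (fun j hj => ?_) |>.2 ⟨i, ?_⟩)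
  · simp only [mem_filter, mem_univ, true_and] at hj ⊢
    exact hj.trans h
  · simp [h]

theorem rank_lt_card (x : ι → α) (i : ι) : rank x i < Fintype.card ι :=
  card_lt_univ_of_notMem (x := i) (by simp)

theorem rank_injective {x : ι → α} (hx : Injective x) : Injective (rank x) := by
  intro i i' h
  by_contra hne
  rcases (hx.ne hne).lt_or_gt with hlt | hlt
  · exact (rank_lt_rank hlt).ne h
  · exact (rank_lt_rank hlt).ne' h

theorem exists_rank_eq {x : ι → α} (hx : Injective x) {r : ℕ} (hr : r < Fintype.card ι) :
    ∃ i, rank x i = r := by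
  let f : ι → Fin (Fintype.card ι) := fun i => ⟨rank x i, rank_lt_card x i⟩
  have hf : Bijective f := (Fintype.bijective_iff_injective_and_card f).2
    ⟨fun i i' h => rank_injective hx (Fin.val_eq_of_eq h), (Fintype.card_fin _).symm⟩
  obtain ⟨i, hi⟩ := hf.surjective ⟨r, hr⟩
  exact ⟨i, congrArg Fin.val hi⟩

theorem rank_comp_perm (x : ι → α) (σ : Equiv.Perm ι) (i : ι) :
    rank (x ∘ σ) i = rank x (σ i) := by
  simp only [rank, card_filter]
  exact Equiv.sum_comp σ (fun j => if x j < x (σ i) then 1 else 0)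

theorem natCard_castSucc_lt_last_eq_rank {n : ℕ} (x : Fin (n + 1) → α) :
    Nat.card {j : Fin n // x j.castSucc < x (Fin.last n)} = rank x (Fin.last n) := by
  rw [Nat.card_eq_fintype_card, Fintype.card_subtype, rank, card_filter, card_filter,
    Fin.sum_univ_castSucc]
  simp

variable [TopologicalSpace α] [OrderClosedTopology α] [SecondCountableTopology α]
  [MeasurableSpace α] [OpensMeasurableSpace α]

theorem measurable_rank (i : ι) : Measurable fun x : ι → α => rank x i := by
  simp only [rank, card_filter]
  exact measurable_sum _ fun j _ => Measurable.ite
    (measurableSet_lt (measurable_pi_apply j) (measurable_pi_apply i)) measurable_const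
    measurable_const

theorem measure_rank_eq_inv_card (π : Measure (ι → α)) [IsProbabilityMeasure π]
    (hexch : ∀ σ : Equiv.Perm ι, MeasurePreserving (fun x : ι → α => x ∘ σ) π π)
    (hinj : ∀ᵐ x ∂π, Injective x) (i : ι) {r : ℕ} (hr : r < Fintype.card ι) :
    π {x | rank x i = r} = (Fintype.card ι : ENNReal)⁻¹ := by
  classical
  set B : ι → Set (ι → α) := fun i => {x | rank x i = r}
  have hB (i : ι) : MeasurableSet (B i) := measurable_rank i (measurableSet_singleton r)
  have hB_eq (j : ι) : π (B j) = π (B i) := by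
    have hpre : (fun x : ι → α => x ∘ Equiv.swap j i) ⁻¹' B i = B j := by
      ext x; simp [B, rank_comp_perm]
    rw [← hpre, (hexch _).measure_preimage (hB i).nullMeasurableSet]
  have hdisj : Pairwise (AEDisjoint π on B) := fun j j' hjj' =>
    measure_mono_null (fun x hx hx' => hjj' (rank_injective hx' (hx.1.trans hx.2.symm)))
      (ae_iff.1 hinj)
  have hcover : π (⋃ j, B j) = 1 := by
    rw [← prob_compl_eq_zero_iff (.iUnion hB)]
    exact measure_mono_null (fun x hx hx' => hx (Set.mem_iUnion.2 (exists_rank_eq hx' hr)))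
      (ae_iff.1 hinj)
  have hsum : (Fintype.card ι : ENNReal) * π (B i) = 1 := by
    rw [← hcover, measure_iUnion₀ hdisj fun j => (hB j).nullMeasurableSet, tsum_fintype,
      sum_congr rfl fun j _ => hB_eq j, sum_const, nsmul_eq_mul, card_univ]
  exact ENNReal.eq_inv_of_mul_eq_one_left (by rwa [mul_comm])

end Rank

theorem ProbabilityTheory.IndepFun.measure_setOf_eq_eq_zero {Ω α : Type*} [MeasurableSpace Ω]
    [MeasurableSpace α] [MeasurableEq α] {μ : Measure Ω} [IsFiniteMeasure μ] {X Y : Ω → α}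
    (hXY : IndepFun X Y μ) (hX : AEMeasurable X μ) (hY : AEMeasurable Y μ)
    [NullSingletonClass (μ.map Y)] : μ {ω | X ω = Y ω} = 0 := by
  have hslice (a : α) : Prod.mk a ⁻¹' Set.diagonal α = {a} := by ext; simp [eq_comm]
  rw [show {ω | X ω = Y ω} = (fun ω => (X ω, Y ω)) ⁻¹' Set.diagonal α from rfl,
    ← Measure.map_apply_of_aemeasurable (hX.prodMk hY) measurableSet_diagonal,
    hXY.map_prod_eq_prod_map_map hX hY, Measure.prod_apply measurableSet_diagonal]
  simp [hslice]

namespace MeasureTheory.Measure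

variable {ι α : Type*} [Fintype ι] [MeasurableSpace α]

theorem ae_injective_pi_s5 [MeasurableEq α] (ν : Measure α) [IsProbabilityMeasure ν]
    [NullSingletonClass ν] : ∀ᵐ x ∂(Measure.pi fun _ : ι => ν), Injective x := by
  have hindep := iIndepFun_pi (μ := fun _ : ι => ν) (X := fun _ a => a) fun _ => aemeasurable_id
  have hties (i j : ι) (hij : i ≠ j) : ∀ᵐ x ∂(Measure.pi fun _ : ι => ν), x i ≠ x j := by
    have : NullSingletonClass ((Measure.pi fun _ : ι => ν).map fun x => x j) := by
      rw [(measurePreserving_eval _ j).map_eq]; infer_instance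
    refine ae_iff.2 ?_
    simpa using (hindep.indepFun hij).measure_setOf_eq_eq_zero
      (measurable_pi_apply i).aemeasurable (measurable_pi_apply j).aemeasurable
  simp only [Injective, ae_all_iff]
  intro i j
  rcases eq_or_ne i j with rfl | hij
  · exact .of_forall fun _ _ => rfl
  · filter_upwards [hties i j hij] with x hx h using absurd h hx

theorem measurePreserving_pi_comp_perm (ν : Measure α) [SigmaFinite ν] (σ : Equiv.Perm ι) :
    MeasurePreserving (fun x : ι → α => x ∘ σ) (Measure.pi fun _ => ν) (Measure.pi fun _ => ν) := by
  convert measurePreserving_piCongrLeft (fun _ => ν) σ.symm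
  ext x
  simp [MeasurableEquiv.coe_piCongrLeft, Equiv.piCongrLeft_apply, eq_rec_constant]

end MeasureTheory.Measure

theorem rank_of_new_score_uniform_general
    {Ω : Type*} [MeasurableSpace Ω]
    (μ : Measure Ω) [IsProbabilityMeasure μ]
    (n : ℕ)
    (s : Fin (n + 1) → Ω → ℝ)
    (hmeas : ∀ i, Measurable (s i))
    (hindep : iIndepFun s μ)
    (hident : ∀ i, μ.map (s i) = μ.map (s 0))
    (hatomless : ∀ x : ℝ, μ {ω | s 0 ω = x} = 0)
    (k : ℕ) (hkn : k ≤ n + 1) :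
    (μ {ω | Nat.card {j : Fin n // s j.castSucc ω < s (Fin.last n) ω} = k - 1}).toReal
      = 1 / (n + 1) := by
  set ν := μ.map (s 0)
  have : IsProbabilityMeasure ν := Measure.isProbabilityMeasure_map (hmeas 0).aemeasurable
  have : NullSingletonClass ν := ⟨fun x => by
    rw [Measure.map_apply (hmeas 0) (measurableSet_singleton x)]; exact hatomless x⟩
  have hS : Measurable fun ω i => s i ω := measurable_pi_lambda _ hmeas
  have hlaw : μ.map (fun ω i => s i ω) = Measure.pi fun _ => ν := by
    simpa only [hident] using hindep.map_fun_eq_pi_map fun i => (hmeas i).aemeasurable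
  have hrank := measure_rank_eq_inv_card (Measure.pi fun _ => ν)
    (Measure.measurePreserving_pi_comp_perm ν) (Measure.ae_injective_pi_s5 ν) (Fin.last n)
    (r := k - 1) (by simp; omega)
  have hevent : {ω | Nat.card {j : Fin n // s j.castSucc ω < s (Fin.last n) ω} = k - 1}
      = (fun ω i => s i ω) ⁻¹' {x | rank x (Fin.last n) = k - 1} := by
    ext ω
    exact Iff.of_eq (congrArg (· = k - 1) (natCard_castSucc_lt_last_eq_rank fun i => s i ω))
  have hB : MeasurableSet {x : Fin (n + 1) → ℝ | rank x (Fin.last n) = k - 1} :=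
    measurable_rank _ (measurableSet_singleton _)
  rw [hevent, ← Measure.map_apply hS hB, hlaw, hrank, Fintype.card_fin, ENNReal.toReal_inv,
    ENNReal.toReal_natCast, one_div, Nat.cast_succ]

/-- **Exchangeability step in the proof of Theorem 3.2.** If `s_1, …, s_{n+1}` are i.i.d.
real random variables with atomless common distribution, then the rank of `s_{n+1}` among
`s_1, …, s_{n+1}` is uniform on `{1, …, n+1}`: for every `k ∈ {1, …, n+1}`, the probability
that exactly `k − 1` of `s_1, …, s_n` fall strictly below `s_{n+1}` is `1/(n+1)`. -/
theorem rank_of_new_score_uniform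
    {Ω : Type*} [MeasurableSpace Ω]
    (μ : Measure Ω) [IsProbabilityMeasure μ]
    (n : ℕ)
    (s : Fin (n + 1) → Ω → ℝ)
    (hmeas : ∀ i, Measurable (s i))
    (hindep : iIndepFun s μ)
    (hident : ∀ i, μ.map (s i) = μ.map (s 0))
    (hatomless : ∀ x : ℝ, μ {ω | s 0 ω = x} = 0)
    (k : ℕ) (hk1 : 1 ≤ k) (hkn : k ≤ n + 1) :
    (μ {ω | Nat.card {j : Fin n // s j.castSucc ω < s (Fin.last n) ω} = k - 1}).toReal
      = 1 / (n + 1) :=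
  rank_of_new_score_uniform_general μ n s hmeas hindep hident hatomless k hkn
end

section
/- Let e and c be independent real-valued random variables, let S(u) = P(e > u) be the survival function of e, assume S(c) > 0 almost surely on the event {c ≤ t}, and let t ∈ ℝ. Then E[ (1 / S(c)) · 1[c ≤ t] · 1[c < e] ] = P( c ≤ t ). (Inverse-probability weighting step in the proof of Lemma 3.3: weighting each censored-before-t subject by the reciprocal of the event-time survival probability at its censoring time recovers the probability of being censored before t.) -/
open MeasureTheory ProbabilityTheory

/-- **Inverse-probability weighting step in the proof of Lemma 3.3.** For independent event
and censoring times `e` and `c`, with `S(u) = P(e > u)` the survival function of `e` and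
`S(c) > 0` a.s. on `{c ≤ t}`:
`E[ (1/S(c)) · 1[c ≤ t] · 1[c < e] ] = P(c ≤ t)`. -/
theorem ipcw_recovers_censoring_probability
    {Ω : Type*} [MeasurableSpace Ω]
    (μ : Measure Ω) [IsProbabilityMeasure μ]
    (e c : Ω → ℝ) (he : Measurable e) (hc : Measurable c)
    (hindep : IndepFun e c μ)
    (S : ℝ → ℝ)
    (hS : ∀ u, S u = (μ {ω | u < e ω}).toReal)
    (t : ℝ)
    (hpos : ∀ᵐ ω ∂μ, c ω ≤ t → 0 < S (c ω)) :
    ∫ ω, (1 / S (c ω)) * (if c ω ≤ t then (1 : ℝ) else 0) *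
        (if c ω < e ω then (1 : ℝ) else 0) ∂μ
      = (μ {ω | c ω ≤ t}).toReal := by
  -- S is antitone, hence measurable
  have hSanti : Antitone S := by
    intro a b hab
    rw [hS a, hS b]
    exact ENNReal.toReal_mono (measure_ne_top _ _)
      (measure_mono fun ω h => lt_of_le_of_lt hab h)
  have hSmeas : Measurable S := hSanti.measurable
  have hSnonneg : ∀ y, 0 ≤ S y := fun y => (hS y) ▸ ENNReal.toReal_nonneg
  set ν := μ.map e with hν
  set κ := μ.map c with hκ
  haveI : IsProbabilityMeasure ν := Measure.isProbabilityMeasure_map he.aemeasurable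
  haveI : IsProbabilityMeasure κ := Measure.isProbabilityMeasure_map hc.aemeasurable
  have hmap : μ.map (fun ω => (c ω, e ω)) = κ.prod ν :=
    (indepFun_iff_map_prod_eq_prod_map_map hc.aemeasurable he.aemeasurable).mp hindep.symm
  -- the ENNReal-valued kernel
  set H : ℝ × ℝ → ENNReal := fun p =>
    ENNReal.ofReal (1 / S p.1) * (if p.1 ≤ t then 1 else 0) * (if p.1 < p.2 then 1 else 0)
    with hH
  have hHmeas : Measurable H := by
    apply Measurable.mul
    · apply Measurable.mul
      · exact (hSmeas.comp measurable_fst).const_div 1 |>.ennreal_ofReal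
      · exact Measurable.ite (measurableSet_le measurable_fst measurable_const)
          measurable_const measurable_const
    · exact Measurable.ite (measurableSet_lt measurable_fst measurable_snd)
        measurable_const measurable_const
  -- nonnegativity of the integrand
  have hnn : 0 ≤ᵐ[μ] fun ω => (1 / S (c ω)) * (if c ω ≤ t then (1 : ℝ) else 0) *
      (if c ω < e ω then (1 : ℝ) else 0) := by
    filter_upwards with ω
    exact mul_nonneg (mul_nonneg (div_nonneg zero_le_one (hSnonneg _))
      (by split <;> norm_num)) (by split <;> norm_num)
  have hfm : Measurable fun ω => (1 / S (c ω)) * (if c ω ≤ t then (1 : ℝ) else 0) *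
      (if c ω < e ω then (1 : ℝ) else 0) := by
    apply Measurable.mul
    · apply Measurable.mul
      · exact ((hSmeas.comp hc).const_div 1)
      · exact Measurable.ite (measurableSet_le hc measurable_const)
          measurable_const measurable_const
    · exact Measurable.ite (measurableSet_lt hc he) measurable_const measurable_const
  rw [integral_eq_lintegral_of_nonneg_ae hnn hfm.aestronglyMeasurable]
  congr 1
  have hofReal : ∀ ω, ENNReal.ofReal ((1 / S (c ω)) * (if c ω ≤ t then (1 : ℝ) else 0) *
      (if c ω < e ω then (1 : ℝ) else 0)) = H (c ω, e ω) := by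
    intro ω
    rw [hH]
    simp only
    rw [ENNReal.ofReal_mul (mul_nonneg (div_nonneg zero_le_one (hSnonneg _))
      (by split <;> norm_num)), ENNReal.ofReal_mul (div_nonneg zero_le_one (hSnonneg _))]
    congr 1 <;> [skip; split <;> simp]
    congr 1
    split <;> simp
  calc ∫⁻ ω, ENNReal.ofReal ((1 / S (c ω)) * (if c ω ≤ t then (1 : ℝ) else 0) *
        (if c ω < e ω then (1 : ℝ) else 0)) ∂μ
      = ∫⁻ ω, H (c ω, e ω) ∂μ := by simp_rw [hofReal]
    _ = ∫⁻ p, H p ∂(μ.map (fun ω => (c ω, e ω))) :=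
        (lintegral_map hHmeas (hc.prodMk he)).symm
    _ = ∫⁻ p, H p ∂(κ.prod ν) := by rw [hmap]
    _ = ∫⁻ y, ∫⁻ x, H (y, x) ∂ν ∂κ := lintegral_prod _ hHmeas.aemeasurable
    _ = ∫⁻ y, ENNReal.ofReal (1 / S y) * (if y ≤ t then 1 else 0) * ENNReal.ofReal (S y) ∂κ := by
        apply lintegral_congr fun y => ?_
        rw [hH]
        simp only
        have hrw : (fun x => (ENNReal.ofReal (1 / S y) * if y ≤ t then 1 else 0) *
            if y < x then (1 : ENNReal) else 0)
            = (Set.Ioi y).indicator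
              (fun _ => ENNReal.ofReal (1 / S y) * if y ≤ t then 1 else 0) := by
          ext x; by_cases h : y < x <;> simp [Set.indicator_apply, Set.mem_Ioi, h]
        rw [hrw, lintegral_indicator_const measurableSet_Ioi]
        congr 1
        rw [hν, Measure.map_apply he measurableSet_Ioi]
        rw [hS y]
        rw [ENNReal.ofReal_toReal (measure_ne_top _ _)]
        rfl
    _ = ∫⁻ y, (if y ≤ t then 1 else 0) ∂κ := by
        apply lintegral_congr_ae
        have hposκ : ∀ᵐ y ∂κ, y ≤ t → 0 < S y := by
          rw [hκ]
          rw [MeasureTheory.ae_map_iff hc.aemeasurable]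
          · exact hpos
          · have : {y : ℝ | y ≤ t → 0 < S y} = {y | y ≤ t}ᶜ ∪ {y | 0 < S y} := by
              ext y; simp [imp_iff_not_or]
            rw [this]
            exact (measurableSet_le measurable_id measurable_const).compl.union
              (measurableSet_lt measurable_const hSmeas)
        filter_upwards [hposκ] with y hy
        by_cases hyt : y ≤ t
        · have hSy := hy hyt
          simp only [hyt, if_true, mul_one]
          rw [← ENNReal.ofReal_mul (by positivity), one_div,
            inv_mul_cancel₀ (ne_of_gt hSy)]
          simp
        · simp [hyt]
    _ = κ {y | y ≤ t} := by
        have : (fun y => if y ≤ t then (1 : ENNReal) else 0) = (Set.Iic t).indicator 1 := by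
          ext y; simp [Set.indicator_apply, Set.mem_Iic]
        rw [this, lintegral_indicator_one measurableSet_Iic]
        rfl
    _ = μ {ω | c ω ≤ t} := by
        rw [hκ, Measure.map_apply hc]
        · rfl
        · exact measurableSet_Iic
end

section
/- Let e and c be independent real-valued random variables, let S(u) = P(e > u) be the survival function of e, fix t ∈ ℝ, set ρ = S(t), and assume S(c) > 0 almost surely on the event {c ≤ t}. Then P( e > t and e ≤ c ) + P( c > t and c < e ) + ρ · E[ (1 / S(c)) · 1[c ≤ t] · 1[c < e] ] = S(t). (Key identity in the proof of Lemma 3.3: the expected distribution-calibration contribution at percentile level ρ = S(t) — counting uncensored subjects with event after t in full, censored subjects with censoring after t in full, and censored subjects with censoring before t with fractional weight ρ/S(c) — equals the true survival probability S(t) = P(e > t); this is the population identity behind the asymptotic equivalence of D-calibration and KM-calibration.) -/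
open MeasureTheory ProbabilityTheory

/-- **Key identity in the proof of Lemma 3.3.** For independent event and censoring times
`e` and `c`, with `S(u) = P(e > u)` the survival function of `e`, `ρ = S(t)`, and
`S(c) > 0` a.s. on `{c ≤ t}`, the expected D-calibration contribution at level `ρ` is
`P(e > t, e ≤ c) + P(c > t, c < e) + ρ · E[(1/S(c)) · 1[c ≤ t] · 1[c < e]] = S(t)`. -/
theorem expected_dcal_contribution_eq_survival
    {Ω : Type*} [MeasurableSpace Ω]
    (μ : Measure Ω) [IsProbabilityMeasure μ]
    (e c : Ω → ℝ) (he : Measurable e) (hc : Measurable c)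
    (hindep : IndepFun e c μ)
    (S : ℝ → ℝ)
    (hS : ∀ u, S u = (μ {ω | u < e ω}).toReal)
    (t : ℝ) (ρ : ℝ) (hρ : ρ = S t)
    (hpos : ∀ᵐ ω ∂μ, c ω ≤ t → 0 < S (c ω)) :
    (μ {ω | t < e ω ∧ e ω ≤ c ω}).toReal
      + (μ {ω | t < c ω ∧ c ω < e ω}).toReal
      + ρ * ∫ ω, (1 / S (c ω)) * (if c ω ≤ t then (1 : ℝ) else 0) *
          (if c ω < e ω then (1 : ℝ) else 0) ∂μ
      = S t := by
  have hSanti : Antitone S := by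
    intro u v huv
    rw [hS, hS]
    exact ENNReal.toReal_mono (measure_ne_top _ _)
      (measure_mono (fun ω h => lt_of_le_of_lt huv h))
  have hSmeas : Measurable S := hSanti.measurable
  have hSnonneg : ∀ u, 0 ≤ S u := fun u => (hS u) ▸ ENNReal.toReal_nonneg
  set A := {ω | t < e ω ∧ e ω ≤ c ω} with hAdef
  set B := {ω | t < c ω ∧ c ω < e ω} with hBdef
  have hA : MeasurableSet A :=
    (measurableSet_lt measurable_const he).inter (measurableSet_le he hc)
  have hB : MeasurableSet B :=
    (measurableSet_lt measurable_const hc).inter (measurableSet_lt hc he)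
  have hunion : A ∪ B = {ω | t < e ω ∧ t < c ω} := by
    ext ω
    simp only [hAdef, hBdef, Set.mem_union, Set.mem_setOf_eq]
    constructor
    · rintro (⟨h1, h2⟩ | ⟨h1, h2⟩)
      · exact ⟨h1, lt_of_lt_of_le h1 h2⟩
      · exact ⟨h1.trans h2, h1⟩
    · rintro ⟨h1, h2⟩
      rcases le_or_gt (e ω) (c ω) with h | h
      · exact Or.inl ⟨h1, h⟩
      · exact Or.inr ⟨h2, h⟩
  have hdisj : Disjoint A B := by
    rw [Set.disjoint_left]
    rintro ω ⟨_, h2⟩ ⟨_, h4⟩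
    exact absurd h2 (not_le.mpr h4)
  -- Step A+B : the first two terms
  have hAB : μ A + μ B = μ {ω | t < e ω} * μ {ω | t < c ω} := by
    rw [← measure_union hdisj hB, hunion]
    have : {ω | t < e ω ∧ t < c ω} = e ⁻¹' Set.Ioi t ∩ c ⁻¹' Set.Ioi t := rfl
    rw [this]
    exact hindep.measure_inter_preimage_eq_mul _ _ measurableSet_Ioi measurableSet_Ioi
  -- Step C : the integral
  have hgmeas : Measurable fun y : ℝ => (1 / S y) * (if y ≤ t then (1 : ℝ) else 0) :=
    (measurable_const.div hSmeas).mul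
      (Measurable.ite (measurableSet_le measurable_id measurable_const)
        measurable_const measurable_const)
  have hFmeas : Measurable fun p : ℝ × ℝ =>
      (1 / S p.1) * (if p.1 ≤ t then (1 : ℝ) else 0) * (if p.1 < p.2 then (1 : ℝ) else 0) :=
    (hgmeas.comp measurable_fst).mul
      (Measurable.ite (measurableSet_lt measurable_fst measurable_snd)
        measurable_const measurable_const)
  have hgnn : ∀ y : ℝ, 0 ≤ (1 / S y) * (if y ≤ t then (1 : ℝ) else 0) := by
    intro y
    apply mul_nonneg (div_nonneg zero_le_one (hSnonneg y))
    split_ifs <;> norm_num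
  have hFnn : ∀ p : ℝ × ℝ,
      0 ≤ (1 / S p.1) * (if p.1 ≤ t then (1 : ℝ) else 0) * (if p.1 < p.2 then (1 : ℝ) else 0) := by
    intro p
    apply mul_nonneg (hgnn _)
    split_ifs <;> norm_num
  have hmap : μ.map (fun ω => (c ω, e ω)) = (μ.map c).prod (μ.map e) :=
    (indepFun_iff_map_prod_eq_prod_map_map hc.aemeasurable he.aemeasurable).mp hindep.symm
  haveI : IsProbabilityMeasure (μ.map e) := Measure.isProbabilityMeasure_map he.aemeasurable
  haveI : IsProbabilityMeasure (μ.map c) := Measure.isProbabilityMeasure_map hc.aemeasurable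
  have hpos' : ∀ᵐ y ∂(μ.map c), y ≤ t → 0 < S y := by
    rw [ae_map_iff hc.aemeasurable]
    · exact hpos
    · have : {y : ℝ | y ≤ t → 0 < S y} = {y : ℝ | y ≤ t}ᶜ ∪ {y : ℝ | 0 < S y} := by
        ext y; simp [imp_iff_not_or]
      rw [this]
      exact ((measurableSet_le measurable_id measurable_const).compl).union
        (hSmeas measurableSet_Ioi)
  have hint : ∫ ω, (1 / S (c ω)) * (if c ω ≤ t then (1 : ℝ) else 0) *
      (if c ω < e ω then (1 : ℝ) else 0) ∂μ = (μ {ω | c ω ≤ t}).toReal := by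
    rw [integral_eq_lintegral_of_nonneg_ae (ae_of_all _ fun ω => hFnn (c ω, e ω))
      ((hFmeas.comp (hc.prodMk he)).aestronglyMeasurable)]
    congr 1
    calc ∫⁻ ω, ENNReal.ofReal ((1 / S (c ω)) * (if c ω ≤ t then (1 : ℝ) else 0) *
            (if c ω < e ω then (1 : ℝ) else 0)) ∂μ
        = ∫⁻ p, ENNReal.ofReal ((1 / S p.1) * (if p.1 ≤ t then (1 : ℝ) else 0) *
            (if p.1 < p.2 then (1 : ℝ) else 0)) ∂((μ.map c).prod (μ.map e)) := by
          rw [← hmap, lintegral_map hFmeas.ennreal_ofReal (hc.prodMk he)]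
      _ = ∫⁻ y, ∫⁻ x, ENNReal.ofReal ((1 / S y) * (if y ≤ t then (1 : ℝ) else 0) *
            (if y < x then (1 : ℝ) else 0)) ∂(μ.map e) ∂(μ.map c) := by
          rw [lintegral_prod _ hFmeas.ennreal_ofReal.aemeasurable]
      _ = ∫⁻ y, ENNReal.ofReal ((1 / S y) * (if y ≤ t then (1 : ℝ) else 0) * S y)
            ∂(μ.map c) := by
          apply lintegral_congr fun y => ?_
          have hx : ∀ x : ℝ, ENNReal.ofReal ((1 / S y) * (if y ≤ t then (1 : ℝ) else 0) *
              (if y < x then (1 : ℝ) else 0)) = Set.indicator (Set.Ioi y)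
              (fun _ => ENNReal.ofReal ((1 / S y) * (if y ≤ t then (1 : ℝ) else 0))) x := by
            intro x
            rw [Set.indicator_apply]
            by_cases h : y < x <;> simp [h, Set.mem_Ioi]
          simp_rw [hx]
          rw [lintegral_indicator measurableSet_Ioi, setLIntegral_const,
            Measure.map_apply he measurableSet_Ioi]
          have : μ (e ⁻¹' Set.Ioi y) = ENNReal.ofReal (S y) := by
            rw [hS y, ENNReal.ofReal_toReal (measure_ne_top _ _)]
            rfl
          rw [this, ← ENNReal.ofReal_mul (hgnn y)]
      _ = ∫⁻ y, Set.indicator (Set.Iic t) (fun _ => (1 : ENNReal)) y ∂(μ.map c) := by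
          apply lintegral_congr_ae
          filter_upwards [hpos'] with y hy
          rw [Set.indicator_apply]
          by_cases h : y ≤ t
          · rw [if_pos h, if_pos (Set.mem_Iic.mpr h), mul_one,
              one_div_mul_cancel (ne_of_gt (hy h)), ENNReal.ofReal_one]
          · rw [if_neg h, if_neg (fun hm => h (Set.mem_Iic.mp hm)), mul_zero, zero_mul,
              ENNReal.ofReal_zero]
      _ = μ {ω | c ω ≤ t} := by
          rw [lintegral_indicator measurableSet_Iic, setLIntegral_one,
            Measure.map_apply hc measurableSet_Iic]
          rfl
  rw [hint, hρ]
  -- final arithmetic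
  have h1 : μ {ω | t < c ω} + μ {ω | c ω ≤ t} = 1 := by
    have hcompl : {ω | t < c ω}ᶜ = {ω | c ω ≤ t} := by
      ext ω; simp [not_lt]
    rw [← hcompl, measure_add_measure_compl (measurableSet_lt measurable_const hc)]
    exact measure_univ
  have h2 : (μ A).toReal + (μ B).toReal
      = S t * (μ {ω | t < c ω}).toReal := by
    rw [← ENNReal.toReal_add (measure_ne_top _ _) (measure_ne_top _ _), hAB,
      ENNReal.toReal_mul, hS t]
  rw [h2]
  have h3 : (μ {ω | t < c ω}).toReal + (μ {ω | c ω ≤ t}).toReal = 1 := by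
    rw [← ENNReal.toReal_add (measure_ne_top _ _) (measure_ne_top _ _), h1]
    simp
  linear_combination S t * h3
end
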